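/- arXiv:2511.13382 — 5 statements merged into one kernel-verified Lean document; each statement's English description precedes it below -/
import Mathlib

section
/- Let p, q : ℝ × ℝ → ℝ, written p(x,t) and q(x,t), be smooth (infinitely differentiable) functions satisfying the modified Boussinesq system p_t = 2(pq)_x + q_xx and q_t = −(1/3)p_xx + (2/3)p·p_x − 2q·q_x at every point. Define u := 3/4 − (2p_x + 3q² + p²) and v := −2(q_xx + 3p·q_x + q·p_x + 2q(p² − q²)). Then at every point u_t = v_x and v_t − u_x + (2/3)(u²)_x + (1/3)u_xxx = 0; that is, the Miura transformation sends solutions of the modified Boussinesq system to solutions of the two-component good Boussinesq system. -/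
/-- Partial derivative in the first (space) variable. -/
noncomputable def pdx (f : ℝ → ℝ → ℝ) : ℝ → ℝ → ℝ := fun x t => deriv (fun x' => f x' t) x

/-- Partial derivative in the second (time) variable. -/
noncomputable def pdt (f : ℝ → ℝ → ℝ) : ℝ → ℝ → ℝ := fun x t => deriv (fun t' => f x t') t

/-- Smoothness of a curried two-variable function. -/
def Sm (f : ℝ → ℝ → ℝ) : Prop := ContDiff ℝ (⊤ : ℕ∞) (fun z : ℝ × ℝ => f z.1 z.2)

theorem sm_const (c : ℝ) : Sm (fun _ _ => c) := contDiff_const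

theorem Sm.add' {f g : ℝ → ℝ → ℝ} (hf : Sm f) (hg : Sm g) :
    Sm (fun x t => f x t + g x t) := ContDiff.add hf hg

theorem Sm.sub' {f g : ℝ → ℝ → ℝ} (hf : Sm f) (hg : Sm g) :
    Sm (fun x t => f x t - g x t) := ContDiff.sub hf hg

theorem Sm.mul' {f g : ℝ → ℝ → ℝ} (hf : Sm f) (hg : Sm g) :
    Sm (fun x t => f x t * g x t) := ContDiff.mul hf hg

theorem Sm.sq' {f : ℝ → ℝ → ℝ} (hf : Sm f) :
    Sm (fun x t => f x t ^ 2) := ContDiff.pow hf 2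

theorem Sm.diffx {f : ℝ → ℝ → ℝ} (hf : Sm f) (x t : ℝ) :
    DifferentiableAt ℝ (fun x' => f x' t) x := by
  have : (fun x' => f x' t) = (fun z : ℝ × ℝ => f z.1 z.2) ∘ (fun x' => (x', t)) := rfl
  rw [this]
  exact ((hf.differentiable (by simp)).comp
    ((differentiable_id.prodMk (differentiable_const t)))).differentiableAt

theorem Sm.difft {f : ℝ → ℝ → ℝ} (hf : Sm f) (x t : ℝ) :
    DifferentiableAt ℝ (fun t' => f x t') t := by
  have : (fun t' => f x t') = (fun z : ℝ × ℝ => f z.1 z.2) ∘ (fun t' => (x, t')) := rfl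
  rw [this]
  exact ((hf.differentiable (by simp)).comp
    ((differentiable_const x).prodMk differentiable_id)).differentiableAt

theorem pdx_fderiv {f : ℝ → ℝ → ℝ} (hf : Sm f) (x t : ℝ) :
    pdx f x t = fderiv ℝ (fun z : ℝ × ℝ => f z.1 z.2) (x, t) (1, 0) := by
  have h1 : HasFDerivAt (fun x' : ℝ => (x', t))
      ((ContinuousLinearMap.id ℝ ℝ).prod 0) x :=
    HasFDerivAt.prodMk (hasFDerivAt_id x) (hasFDerivAt_const t x)
  have h2 : HasFDerivAt (fun z : ℝ × ℝ => f z.1 z.2)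
      (fderiv ℝ (fun z : ℝ × ℝ => f z.1 z.2) (x, t)) (x, t) :=
    ((hf.differentiable (by simp)) (x, t)).hasFDerivAt
  have h3 := (h2.comp x h1).hasDerivAt
  have : (fun x' => f x' t) = (fun z : ℝ × ℝ => f z.1 z.2) ∘ (fun x' : ℝ => (x', t)) := rfl
  rw [pdx, this, h3.deriv]
  simp

theorem pdt_fderiv {f : ℝ → ℝ → ℝ} (hf : Sm f) (x t : ℝ) :
    pdt f x t = fderiv ℝ (fun z : ℝ × ℝ => f z.1 z.2) (x, t) (0, 1) := by
  have h1 : HasFDerivAt (fun t' : ℝ => (x, t'))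
      ((0 : ℝ →L[ℝ] ℝ).prod (ContinuousLinearMap.id ℝ ℝ)) t :=
    HasFDerivAt.prodMk (hasFDerivAt_const x t) (hasFDerivAt_id t)
  have h2 : HasFDerivAt (fun z : ℝ × ℝ => f z.1 z.2)
      (fderiv ℝ (fun z : ℝ × ℝ => f z.1 z.2) (x, t)) (x, t) :=
    ((hf.differentiable (by simp)) (x, t)).hasFDerivAt
  have h3 := (h2.comp t h1).hasDerivAt
  have : (fun t' => f x t') = (fun z : ℝ × ℝ => f z.1 z.2) ∘ (fun t' : ℝ => (x, t')) := rfl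
  rw [pdt, this, h3.deriv]
  simp

theorem Sm.pdx' {f : ℝ → ℝ → ℝ} (hf : Sm f) : Sm (pdx f) := by
  have : (fun z : ℝ × ℝ => pdx f z.1 z.2)
      = fun z : ℝ × ℝ => fderiv ℝ (fun z : ℝ × ℝ => f z.1 z.2) z (1, 0) := by
    funext z; exact pdx_fderiv hf z.1 z.2
  rw [Sm, this]
  exact (hf.fderiv_right (by simp)).clm_apply contDiff_const

theorem Sm.pdt' {f : ℝ → ℝ → ℝ} (hf : Sm f) : Sm (pdt f) := by
  have : (fun z : ℝ × ℝ => pdt f z.1 z.2)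
      = fun z : ℝ × ℝ => fderiv ℝ (fun z : ℝ × ℝ => f z.1 z.2) z (0, 1) := by
    funext z; exact pdt_fderiv hf z.1 z.2
  rw [Sm, this]
  exact (hf.fderiv_right (by simp)).clm_apply contDiff_const

theorem pdx_pdt_comm {f : ℝ → ℝ → ℝ} (hf : Sm f) : pdt (pdx f) = pdx (pdt f) := by
  funext x t
  set F := fun z : ℝ × ℝ => f z.1 z.2 with hF
  have hsym : IsSymmSndFDerivAt ℝ F (x, t) :=
    hf.contDiffAt.isSymmSndFDerivAt (by rw [minSmoothness_of_isRCLikeNormedField]; exact WithTop.coe_le_coe.mpr le_top)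
  have hdF : DifferentiableAt ℝ (fderiv ℝ F) (x, t) :=
    ((hf.fderiv_right (m := 1) (WithTop.coe_le_coe.mpr le_top)).differentiable one_ne_zero).differentiableAt
  have key : ∀ v w : ℝ × ℝ,
      fderiv ℝ (fun z => fderiv ℝ F z w) (x, t) v = fderiv ℝ (fderiv ℝ F) (x, t) v w := by
    intro v w
    rw [fderiv_clm_apply hdF (differentiableAt_const w)]
    simp
  have e1 : pdt (pdx f) x t = fderiv ℝ (fderiv ℝ F) (x, t) (0, 1) (1, 0) := by
    rw [pdt_fderiv hf.pdx' x t]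
    have : (fun z : ℝ × ℝ => pdx f z.1 z.2) = fun z => fderiv ℝ F z (1, 0) := by
      funext z; exact pdx_fderiv hf z.1 z.2
    rw [this, key]
  have e2 : pdx (pdt f) x t = fderiv ℝ (fderiv ℝ F) (x, t) (1, 0) (0, 1) := by
    rw [pdx_fderiv hf.pdt' x t]
    have : (fun z : ℝ × ℝ => pdt f z.1 z.2) = fun z => fderiv ℝ F z (0, 1) := by
      funext z; exact pdt_fderiv hf z.1 z.2
    rw [this, key]
  rw [e1, e2, hsym]

theorem pdx_const (c : ℝ) : pdx (fun _ _ => c) = fun _ _ => 0 := by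
  funext x t; exact deriv_const x c

theorem pdt_const (c : ℝ) : pdt (fun _ _ => c) = fun _ _ => 0 := by
  funext x t; exact deriv_const t c

theorem pdx_add {f g : ℝ → ℝ → ℝ} (hf : Sm f) (hg : Sm g) :
    pdx (fun x t => f x t + g x t) = fun x t => pdx f x t + pdx g x t := by
  funext x t; exact deriv_add (hf.diffx x t) (hg.diffx x t)

theorem pdt_add {f g : ℝ → ℝ → ℝ} (hf : Sm f) (hg : Sm g) :
    pdt (fun x t => f x t + g x t) = fun x t => pdt f x t + pdt g x t := by
  funext x t; exact deriv_add (hf.difft x t) (hg.difft x t)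

theorem pdx_sub {f g : ℝ → ℝ → ℝ} (hf : Sm f) (hg : Sm g) :
    pdx (fun x t => f x t - g x t) = fun x t => pdx f x t - pdx g x t := by
  funext x t; exact deriv_sub (hf.diffx x t) (hg.diffx x t)

theorem pdt_sub {f g : ℝ → ℝ → ℝ} (hf : Sm f) (hg : Sm g) :
    pdt (fun x t => f x t - g x t) = fun x t => pdt f x t - pdt g x t := by
  funext x t; exact deriv_sub (hf.difft x t) (hg.difft x t)

theorem pdx_mul {f g : ℝ → ℝ → ℝ} (hf : Sm f) (hg : Sm g) :
    pdx (fun x t => f x t * g x t) = fun x t => pdx f x t * g x t + f x t * pdx g x t := by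
  funext x t; exact deriv_mul (hf.diffx x t) (hg.diffx x t)

theorem pdt_mul {f g : ℝ → ℝ → ℝ} (hf : Sm f) (hg : Sm g) :
    pdt (fun x t => f x t * g x t) = fun x t => pdt f x t * g x t + f x t * pdt g x t := by
  funext x t; exact deriv_mul (hf.difft x t) (hg.difft x t)

theorem pdx_sq {f : ℝ → ℝ → ℝ} (hf : Sm f) :
    pdx (fun x t => f x t ^ 2) = fun x t => pdx f x t * f x t + f x t * pdx f x t := by
  have : (fun x t => f x t ^ 2) = fun x t => f x t * f x t := by
    funext x t; ring
  rw [this, pdx_mul hf hf]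

theorem pdt_sq {f : ℝ → ℝ → ℝ} (hf : Sm f) :
    pdt (fun x t => f x t ^ 2) = fun x t => pdt f x t * f x t + f x t * pdt f x t := by
  have : (fun x t => f x t ^ 2) = fun x t => f x t * f x t := by
    funext x t; ring
  rw [this, pdt_mul hf hf]

/-- The Miura transformation `u = 3/4 − (2p_x + 3q² + p²)`,
`v = −2(q_xx + 3p q_x + q p_x + 2q(p² − q²))` sends smooth solutions of the
modified Boussinesq system `p_t = 2(pq)_x + q_xx`,
`q_t = −(1/3)p_xx + (2/3)p p_x − 2q q_x` to solutions of the two-component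
good Boussinesq system `u_t = v_x`, `v_t − u_x + (2/3)(u²)_x + (1/3)u_xxx = 0`. -/
theorem miura_modified_to_good_boussinesq
    (p q : ℝ → ℝ → ℝ)
    (hp : ContDiff ℝ (⊤ : ℕ∞) (fun z : ℝ × ℝ => p z.1 z.2))
    (hq : ContDiff ℝ (⊤ : ℕ∞) (fun z : ℝ × ℝ => q z.1 z.2))
    (heq1 : ∀ x t : ℝ,
      pdt p x t = 2 * pdx (fun x' t' => p x' t' * q x' t') x t + pdx (pdx q) x t)
    (heq2 : ∀ x t : ℝ,
      pdt q x t = -(1/3) * pdx (pdx p) x t + (2/3) * p x t * pdx p x t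
        - 2 * q x t * pdx q x t)
    (u v : ℝ → ℝ → ℝ)
    (hu : ∀ x t : ℝ, u x t = 3/4 - (2 * pdx p x t + 3 * (q x t)^2 + (p x t)^2))
    (hv : ∀ x t : ℝ, v x t = -2 * (pdx (pdx q) x t + 3 * p x t * pdx q x t
        + q x t * pdx p x t + 2 * q x t * ((p x t)^2 - (q x t)^2))) :
    (∀ x t : ℝ, pdt u x t = pdx v x t) ∧
    (∀ x t : ℝ, pdt v x t - pdx u x t
        + (2/3) * pdx (fun x' t' => (u x' t')^2) x t
        + (1/3) * pdx (pdx (pdx u)) x t = 0) := by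
  have hp' : Sm p := hp
  have hq' : Sm q := hq
  have hu' : u = fun x t => 3/4 - (2 * pdx p x t + 3 * (q x t)^2 + (p x t)^2) := by
    funext x t; exact hu x t
  have hv' : v = fun x t => -2 * (pdx (pdx q) x t + 3 * p x t * pdx q x t
      + q x t * pdx p x t + 2 * q x t * ((p x t)^2 - (q x t)^2)) := by
    funext x t; exact hv x t
  have E1 : pdt p = fun x t =>
      2 * (pdx p x t * q x t + p x t * pdx q x t) + pdx (pdx q) x t := by
    funext x t
    rw [heq1 x t, pdx_mul hp' hq']
  have E2 : pdt q = fun x t => -(1/3) * pdx (pdx p) x t + (2/3) * p x t * pdx p x t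
      - 2 * q x t * pdx q x t := by
    funext x t; exact heq2 x t
  have C1 : pdt (pdx p) = pdx (pdt p) := pdx_pdt_comm hp'
  have C2 : pdt (pdx q) = pdx (pdt q) := pdx_pdt_comm hq'
  have C3 : pdt (pdx (pdx q)) = pdx (pdt (pdx q)) := pdx_pdt_comm hq'.pdx'
  constructor
  · intro x t
    simp (config := { maxDischargeDepth := 50 }) only [hu', hv', C3, C2, C1, E1, E2, pdx_add, pdx_sub, pdx_mul, pdx_sq,
      pdx_const, pdt_add, pdt_sub, pdt_mul, pdt_sq, pdt_const,
      Sm.add', Sm.sub', Sm.mul', Sm.sq', Sm.pdx', sm_const, hp', hq']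
    ring
  · intro x t
    simp (config := { maxDischargeDepth := 50 }) only [hu', hv', C3, C2, C1, E1, E2, pdx_add, pdx_sub, pdx_mul, pdx_sq,
      pdx_const, pdt_add, pdt_sub, pdt_mul, pdt_sq, pdt_const,
      Sm.add', Sm.sub', Sm.mul', Sm.sq', Sm.pdx', sm_const, hp', hq']
    ring
end

section
/- Let p, q : ℝ × ℝ → ℝ, written p(x,t) and q(x,t), be smooth (infinitely differentiable) functions satisfying the modified Boussinesq system p_t = 2(pq)_x + q_xx and q_t = −(1/3)p_xx + (2/3)p·p_x − 2q·q_x at every point. Define u := −p_x − (1/2)p² − (3/2)q² and w := −q_xx − 3p·q_x − q·p_x − 2q·p² + 2q³. Then at every point u_t = w_x and w_t + (4/3)(u²)_x + (1/3)u_xxx = 0; that is, this Miura transformation sends solutions of the modified Boussinesq system to solutions of the two-component normalized good Boussinesq system. -/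
private theorem HasDerivAt.congrD {f : ℝ → ℝ} {v v' : ℝ} {x : ℝ}
    (h : HasDerivAt f v x) (e : v = v') : HasDerivAt f v' x := e ▸ h

private lemma diffX {f : ℝ → ℝ → ℝ} (hf : ContDiff ℝ (⊤ : ℕ∞) (fun z : ℝ × ℝ => f z.1 z.2)) (t : ℝ) :
    Differentiable ℝ fun x' => f x' t :=
  (hf.differentiable (by simp)).comp (differentiable_id.prodMk (differentiable_const t))

private lemma diffT {f : ℝ → ℝ → ℝ} (hf : ContDiff ℝ (⊤ : ℕ∞) (fun z : ℝ × ℝ => f z.1 z.2)) (x : ℝ) :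
    Differentiable ℝ fun t' => f x t' :=
  (hf.differentiable (by simp)).comp ((differentiable_const x).prodMk differentiable_id)

private lemma hasX {f : ℝ → ℝ → ℝ} (hf : ContDiff ℝ (⊤ : ℕ∞) (fun z : ℝ × ℝ => f z.1 z.2)) (x t : ℝ) :
    HasDerivAt (fun x' => f x' t) (pdx f x t) x :=
  (diffX hf t x).hasDerivAt

private lemma hasT {f : ℝ → ℝ → ℝ} (hf : ContDiff ℝ (⊤ : ℕ∞) (fun z : ℝ × ℝ => f z.1 z.2)) (x t : ℝ) :
    HasDerivAt (fun t' => f x t') (pdt f x t) t :=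
  (diffT hf x t).hasDerivAt

private lemma pdx_eq {f : ℝ → ℝ → ℝ} (hf : ContDiff ℝ (⊤ : ℕ∞) (fun z : ℝ × ℝ => f z.1 z.2)) (x t : ℝ) :
    pdx f x t = fderiv ℝ (fun z : ℝ × ℝ => f z.1 z.2) (x, t) (1, 0) := by
  have hl : HasDerivAt (fun x' : ℝ => (x', (t : ℝ))) ((1 : ℝ), (0 : ℝ)) x :=
    (hasDerivAt_id x).prodMk (hasDerivAt_const x t)
  have h : HasDerivAt (fun x' : ℝ => f x' t)
      (fderiv ℝ (fun z : ℝ × ℝ => f z.1 z.2) (x, t) (1, 0)) x :=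
    by exact (hf.differentiable (by simp) (x, t)).hasFDerivAt.comp_hasDerivAt x hl
  exact h.deriv

private lemma pdt_eq {f : ℝ → ℝ → ℝ} (hf : ContDiff ℝ (⊤ : ℕ∞) (fun z : ℝ × ℝ => f z.1 z.2)) (x t : ℝ) :
    pdt f x t = fderiv ℝ (fun z : ℝ × ℝ => f z.1 z.2) (x, t) (0, 1) := by
  have hl : HasDerivAt (fun t' : ℝ => ((x : ℝ), t')) ((0 : ℝ), (1 : ℝ)) t :=
    (hasDerivAt_const t x).prodMk (hasDerivAt_id t)
  have h : HasDerivAt (fun t' : ℝ => f x t')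
      (fderiv ℝ (fun z : ℝ × ℝ => f z.1 z.2) (x, t) (0, 1)) t :=
    (hf.differentiable (by simp) (x, t)).hasFDerivAt.comp_hasDerivAt t hl
  exact h.deriv

private lemma smooth_pdx {f : ℝ → ℝ → ℝ} (hf : ContDiff ℝ (⊤ : ℕ∞) (fun z : ℝ × ℝ => f z.1 z.2)) :
    ContDiff ℝ (⊤ : ℕ∞) (fun z : ℝ × ℝ => pdx f z.1 z.2) := by
  have he : (fun z : ℝ × ℝ => pdx f z.1 z.2)
      = fun z : ℝ × ℝ => fderiv ℝ (fun z : ℝ × ℝ => f z.1 z.2) (z.1, z.2) (1, 0) :=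
    funext fun z => pdx_eq hf z.1 z.2
  rw [he]
  exact (hf.fderiv_right (by simp)).clm_apply contDiff_const

private lemma pdt_pdx_comm {f : ℝ → ℝ → ℝ}
    (hf : ContDiff ℝ (⊤ : ℕ∞) (fun z : ℝ × ℝ => f z.1 z.2)) (x t : ℝ) :
    pdt (pdx f) x t = pdx (pdt f) x t := by
  have hFd : Differentiable ℝ (fun z : ℝ × ℝ => f z.1 z.2) := hf.differentiable (by simp)
  have hGd : Differentiable ℝ (fderiv ℝ (fun z : ℝ × ℝ => f z.1 z.2)) :=
    (hf.fderiv_right (m := (⊤ : ℕ∞)) (by simp)).differentiable (by simp)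
  have h1 : pdt (pdx f) x t
      = fderiv ℝ (fderiv ℝ (fun z : ℝ × ℝ => f z.1 z.2)) (x, t) (0, 1) (1, 0) := by
    show deriv (fun t' => pdx f x t') t = _
    rw [show (fun t' => pdx f x t')
        = (fun t' => fderiv ℝ (fun z : ℝ × ℝ => f z.1 z.2) (x, t') (1, 0)) from
      funext fun t' => pdx_eq hf x t']
    have hl : HasDerivAt (fun t' : ℝ => ((x : ℝ), t')) ((0 : ℝ), (1 : ℝ)) t :=
      (hasDerivAt_const t x).prodMk (hasDerivAt_id t)
    have hc : HasDerivAt (fun t' : ℝ => fderiv ℝ (fun z : ℝ × ℝ => f z.1 z.2) (x, t'))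
        (fderiv ℝ (fderiv ℝ (fun z : ℝ × ℝ => f z.1 z.2)) (x, t) ((0 : ℝ), (1 : ℝ))) t :=
      (hGd (x, t)).hasFDerivAt.comp_hasDerivAt t hl
    have h2 := hc.clm_apply (hasDerivAt_const t ((1 : ℝ), (0 : ℝ)))
    simpa using h2.deriv
  have h3 : pdx (pdt f) x t
      = fderiv ℝ (fderiv ℝ (fun z : ℝ × ℝ => f z.1 z.2)) (x, t) (1, 0) (0, 1) := by
    show deriv (fun x' => pdt f x' t) x = _
    rw [show (fun x' => pdt f x' t)
        = (fun x' => fderiv ℝ (fun z : ℝ × ℝ => f z.1 z.2) (x', t) (0, 1)) from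
      funext fun x' => pdt_eq hf x' t]
    have hl : HasDerivAt (fun x' : ℝ => (x', (t : ℝ))) ((1 : ℝ), (0 : ℝ)) x :=
      (hasDerivAt_id x).prodMk (hasDerivAt_const x t)
    have hc : HasDerivAt (fun x' : ℝ => fderiv ℝ (fun z : ℝ × ℝ => f z.1 z.2) (x', t))
        (fderiv ℝ (fderiv ℝ (fun z : ℝ × ℝ => f z.1 z.2)) (x, t) ((1 : ℝ), (0 : ℝ))) x :=
      (hGd (x, t)).hasFDerivAt.comp_hasDerivAt x hl
    have h2 := hc.clm_apply (hasDerivAt_const x ((0 : ℝ), (1 : ℝ)))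
    simpa using h2.deriv
  rw [h1, h3]
  exact second_derivative_symmetric (fun y => (hFd y).hasFDerivAt) ((hGd (x, t)).hasFDerivAt) _ _

/-- The Miura transformation `u = −p_x − (1/2)p² − (3/2)q²`,
`w = −q_xx − 3p q_x − q p_x − 2q p² + 2q³` sends smooth solutions of the
modified Boussinesq system `p_t = 2(pq)_x + q_xx`,
`q_t = −(1/3)p_xx + (2/3)p p_x − 2q q_x` to solutions of the two-component
normalized good Boussinesq system `u_t = w_x`,
`w_t + (4/3)(u²)_x + (1/3)u_xxx = 0`. -/
theorem miura_modified_to_normalized_good_boussinesq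
    (p q : ℝ → ℝ → ℝ)
    (hp : ContDiff ℝ (⊤ : ℕ∞) (fun z : ℝ × ℝ => p z.1 z.2))
    (hq : ContDiff ℝ (⊤ : ℕ∞) (fun z : ℝ × ℝ => q z.1 z.2))
    (heq1 : ∀ x t : ℝ,
      pdt p x t = 2 * pdx (fun x' t' => p x' t' * q x' t') x t + pdx (pdx q) x t)
    (heq2 : ∀ x t : ℝ,
      pdt q x t = -(1/3) * pdx (pdx p) x t + (2/3) * p x t * pdx p x t
        - 2 * q x t * pdx q x t)
    (u w : ℝ → ℝ → ℝ)
    (hu : ∀ x t : ℝ, u x t = -pdx p x t - (1/2) * (p x t)^2 - (3/2) * (q x t)^2)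
    (hw : ∀ x t : ℝ, w x t = -pdx (pdx q) x t - 3 * p x t * pdx q x t
        - q x t * pdx p x t - 2 * q x t * (p x t)^2 + 2 * (q x t)^3) :
    (∀ x t : ℝ, pdt u x t = pdx w x t) ∧
    (∀ x t : ℝ, pdt w x t
        + (4/3) * pdx (fun x' t' => (u x' t')^2) x t
        + (1/3) * pdx (pdx (pdx u)) x t = 0) := by
  have sp1 : ContDiff ℝ (⊤ : ℕ∞) (fun z : ℝ × ℝ => pdx p z.1 z.2) := smooth_pdx hp
  have sp2 : ContDiff ℝ (⊤ : ℕ∞) (fun z : ℝ × ℝ => pdx (pdx p) z.1 z.2) := smooth_pdx sp1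
  have sp3 : ContDiff ℝ (⊤ : ℕ∞) (fun z : ℝ × ℝ => pdx (pdx (pdx p)) z.1 z.2) := smooth_pdx sp2
  have sq1 : ContDiff ℝ (⊤ : ℕ∞) (fun z : ℝ × ℝ => pdx q z.1 z.2) := smooth_pdx hq
  have sq2 : ContDiff ℝ (⊤ : ℕ∞) (fun z : ℝ × ℝ => pdx (pdx q) z.1 z.2) := smooth_pdx sq1
  have sq3 : ContDiff ℝ (⊤ : ℕ∞) (fun z : ℝ × ℝ => pdx (pdx (pdx q)) z.1 z.2) := smooth_pdx sq2
  -- the first PDE with the product rule carried out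
  have hpt : ∀ x t : ℝ, pdt p x t
      = 2 * (pdx p x t * q x t) + 2 * (p x t * pdx q x t) + pdx (pdx q) x t := by
    intro x t
    have hm : pdx (fun x' t' => p x' t' * q x' t') x t
        = pdx p x t * q x t + p x t * pdx q x t := ((hasX hp x t).mul (hasX hq x t)).deriv
    rw [heq1 x t, hm]; ring
  -- x–derivative of the first PDE
  have hptx : ∀ x t : ℝ, pdx (pdt p) x t
      = 2 * (pdx (pdx p) x t * q x t) + 4 * (pdx p x t * pdx q x t)
        + 2 * (p x t * pdx (pdx q) x t) + pdx (pdx (pdx q)) x t := by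
    intro x t
    show deriv (fun x' => pdt p x' t) x = _
    rw [show (fun x' => pdt p x' t)
        = (fun x' => 2 * (pdx p x' t * q x' t) + 2 * (p x' t * pdx q x' t)
            + pdx (pdx q) x' t) from funext fun x' => hpt x' t]
    exact (((((hasX sp1 x t).mul (hasX hq x t)).const_mul 2).add
      (((hasX hp x t).mul (hasX sq1 x t)).const_mul 2)).add
      (hasX sq2 x t)).congrD (by ring) |>.deriv
  -- x–derivative of the second PDE
  have hqtx : ∀ x t : ℝ, pdx (pdt q) x t
      = -(1/3) * pdx (pdx (pdx p)) x t + (2/3) * (pdx p x t * pdx p x t)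
        + (2/3) * (p x t * pdx (pdx p) x t) - 2 * (pdx q x t * pdx q x t)
        - 2 * (q x t * pdx (pdx q) x t) := by
    intro x t
    show deriv (fun x' => pdt q x' t) x = _
    rw [show (fun x' => pdt q x' t)
        = (fun x' => -(1/3) * pdx (pdx p) x' t + (2/3) * (p x' t * pdx p x' t)
            - 2 * (q x' t * pdx q x' t)) from funext fun x' => by rw [heq2 x' t]; ring]
    exact ((((hasX sp2 x t).const_mul (-(1/3))).add
      (((hasX hp x t).mul (hasX sp1 x t)).const_mul (2/3))).sub
      (((hasX hq x t).mul (hasX sq1 x t)).const_mul 2)).congrD (by ring) |>.deriv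
  -- second x–derivative of the second PDE
  have hqtxx : ∀ x t : ℝ, pdx (pdx (pdt q)) x t
      = -(1/3) * pdx (pdx (pdx (pdx p))) x t + 2 * (pdx p x t * pdx (pdx p) x t)
        + (2/3) * (p x t * pdx (pdx (pdx p)) x t) - 6 * (pdx q x t * pdx (pdx q) x t)
        - 2 * (q x t * pdx (pdx (pdx q)) x t) := by
    intro x t
    show deriv (fun x' => pdx (pdt q) x' t) x = _
    rw [show (fun x' => pdx (pdt q) x' t)
        = (fun x' => -(1/3) * pdx (pdx (pdx p)) x' t + (2/3) * (pdx p x' t * pdx p x' t)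
            + (2/3) * (p x' t * pdx (pdx p) x' t) - 2 * (pdx q x' t * pdx q x' t)
            - 2 * (q x' t * pdx (pdx q) x' t)) from funext fun x' => hqtx x' t]
    exact ((((((hasX sp3 x t).const_mul (-(1/3))).add
      (((hasX sp1 x t).mul (hasX sp1 x t)).const_mul (2/3))).add
      (((hasX hp x t).mul (hasX sp2 x t)).const_mul (2/3))).sub
      (((hasX sq1 x t).mul (hasX sq1 x t)).const_mul 2)).sub
      (((hasX hq x t).mul (hasX sq2 x t)).const_mul 2)).congrD (by ring) |>.deriv
  -- commuting mixed partials
  have clP : ∀ x t : ℝ, pdt (pdx p) x t = pdx (pdt p) x t := pdt_pdx_comm hp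
  have clQ : ∀ x t : ℝ, pdt (pdx q) x t = pdx (pdt q) x t := pdt_pdx_comm hq
  have clQf : pdt (pdx q) = pdx (pdt q) := funext fun a => funext fun b => clQ a b
  have clQ2 : ∀ x t : ℝ, pdt (pdx (pdx q)) x t = pdx (pdx (pdt q)) x t := by
    intro x t
    rw [pdt_pdx_comm sq1 x t, clQf]
  -- derivatives of u
  have hUlem : ∀ x t : ℝ, HasDerivAt (fun x' => u x' t)
      (-pdx (pdx p) x t - p x t * pdx p x t - 3 * (q x t * pdx q x t)) x := by
    intro x t
    rw [show (fun x' => u x' t)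
        = (fun x' => -pdx p x' t - (1/2) * (p x' t * p x' t) - (3/2) * (q x' t * q x' t))
        from funext fun x' => by rw [hu x' t]; ring]
    exact (((hasX sp1 x t).neg.sub
      (((hasX hp x t).mul (hasX hp x t)).const_mul (1/2))).sub
      (((hasX hq x t).mul (hasX hq x t)).const_mul (3/2))).congrD (by ring)
  have hU1 : ∀ x t : ℝ, pdx u x t
      = -pdx (pdx p) x t - p x t * pdx p x t - 3 * (q x t * pdx q x t) :=
    fun x t => (hUlem x t).deriv
  have hU2 : ∀ x t : ℝ, pdx (pdx u) x t
      = -pdx (pdx (pdx p)) x t - pdx p x t * pdx p x t - p x t * pdx (pdx p) x t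
        - 3 * (pdx q x t * pdx q x t) - 3 * (q x t * pdx (pdx q) x t) := by
    intro x t
    show deriv (fun x' => pdx u x' t) x = _
    rw [show (fun x' => pdx u x' t)
        = (fun x' => -pdx (pdx p) x' t - p x' t * pdx p x' t - 3 * (q x' t * pdx q x' t))
        from funext fun x' => hU1 x' t]
    exact ((((hasX sp2 x t).neg.sub
      ((hasX hp x t).mul (hasX sp1 x t))).sub
      (((hasX hq x t).mul (hasX sq1 x t)).const_mul 3))).congrD (by ring) |>.deriv
  have hU3 : ∀ x t : ℝ, pdx (pdx (pdx u)) x t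
      = -pdx (pdx (pdx (pdx p))) x t - 3 * (pdx p x t * pdx (pdx p) x t)
        - p x t * pdx (pdx (pdx p)) x t - 9 * (pdx q x t * pdx (pdx q) x t)
        - 3 * (q x t * pdx (pdx (pdx q)) x t) := by
    intro x t
    show deriv (fun x' => pdx (pdx u) x' t) x = _
    rw [show (fun x' => pdx (pdx u) x' t)
        = (fun x' => -pdx (pdx (pdx p)) x' t - pdx p x' t * pdx p x' t
            - p x' t * pdx (pdx p) x' t - 3 * (pdx q x' t * pdx q x' t)
            - 3 * (q x' t * pdx (pdx q) x' t)) from funext fun x' => hU2 x' t]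
    exact (((((hasX sp3 x t).neg.sub
      ((hasX sp1 x t).mul (hasX sp1 x t))).sub
      ((hasX hp x t).mul (hasX sp2 x t))).sub
      (((hasX sq1 x t).mul (hasX sq1 x t)).const_mul 3)).sub
      (((hasX hq x t).mul (hasX sq2 x t)).const_mul 3)).congrD (by ring) |>.deriv
  have hUt : ∀ x t : ℝ, pdt u x t
      = -pdt (pdx p) x t - p x t * pdt p x t - 3 * (q x t * pdt q x t) := by
    intro x t
    show deriv (fun t' => u x t') t = _
    rw [show (fun t' => u x t')
        = (fun t' => -pdx p x t' - (1/2) * (p x t' * p x t') - (3/2) * (q x t' * q x t'))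
        from funext fun t' => by rw [hu x t']; ring]
    exact (((hasT sp1 x t).neg.sub
      (((hasT hp x t).mul (hasT hp x t)).const_mul (1/2))).sub
      (((hasT hq x t).mul (hasT hq x t)).const_mul (3/2))).congrD (by ring) |>.deriv
  -- derivatives of w
  have hW1 : ∀ x t : ℝ, pdx w x t
      = -pdx (pdx (pdx q)) x t - 3 * (pdx p x t * pdx q x t) - 3 * (p x t * pdx (pdx q) x t)
        - pdx q x t * pdx p x t - q x t * pdx (pdx p) x t
        - 2 * (pdx q x t * (p x t * p x t)) - 4 * (q x t * (p x t * pdx p x t))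
        + 6 * (q x t * (q x t * pdx q x t)) := by
    intro x t
    show deriv (fun x' => w x' t) x = _
    rw [show (fun x' => w x' t)
        = (fun x' => -pdx (pdx q) x' t - 3 * (p x' t * pdx q x' t) - q x' t * pdx p x' t
            - 2 * (q x' t * (p x' t * p x' t)) + 2 * (q x' t * (q x' t * q x' t)))
        from funext fun x' => by rw [hw x' t]; ring]
    exact (((((hasX sq2 x t).neg.sub
      (((hasX hp x t).mul (hasX sq1 x t)).const_mul 3)).sub
      ((hasX hq x t).mul (hasX sp1 x t))).sub
      (((hasX hq x t).mul ((hasX hp x t).mul (hasX hp x t))).const_mul 2)).add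
      (((hasX hq x t).mul ((hasX hq x t).mul (hasX hq x t))).const_mul 2)).congrD
      (by simp only [Pi.mul_apply]; ring) |>.deriv
  have hWt : ∀ x t : ℝ, pdt w x t
      = -pdt (pdx (pdx q)) x t - 3 * (pdt p x t * pdx q x t) - 3 * (p x t * pdt (pdx q) x t)
        - pdt q x t * pdx p x t - q x t * pdt (pdx p) x t
        - 2 * (pdt q x t * (p x t * p x t)) - 4 * (q x t * (p x t * pdt p x t))
        + 6 * (q x t * (q x t * pdt q x t)) := by
    intro x t
    show deriv (fun t' => w x t') t = _
    rw [show (fun t' => w x t')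
        = (fun t' => -pdx (pdx q) x t' - 3 * (p x t' * pdx q x t') - q x t' * pdx p x t'
            - 2 * (q x t' * (p x t' * p x t')) + 2 * (q x t' * (q x t' * q x t')))
        from funext fun t' => by rw [hw x t']; ring]
    exact (((((hasT sq2 x t).neg.sub
      (((hasT hp x t).mul (hasT sq1 x t)).const_mul 3)).sub
      ((hasT hq x t).mul (hasT sp1 x t))).sub
      (((hasT hq x t).mul ((hasT hp x t).mul (hasT hp x t))).const_mul 2)).add
      (((hasT hq x t).mul ((hasT hq x t).mul (hasT hq x t))).const_mul 2)).congrD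
      (by simp only [Pi.mul_apply]; ring) |>.deriv
  -- derivative of u²
  have hUsq : ∀ x t : ℝ, pdx (fun x' t' => (u x' t')^2) x t = 2 * (u x t * pdx u x t) := by
    intro x t
    show deriv (fun x' => (u x' t)^2) x = _
    rw [show (fun x' => (u x' t)^2) = (fun x' => u x' t * u x' t) from
      funext fun x' => by ring]
    have hasU : HasDerivAt (fun x' => u x' t) (pdx u x t) x :=
      (hUlem x t).congrD (hU1 x t).symm
    exact (hasU.mul hasU).congrD (by ring) |>.deriv
  constructor
  · intro x t
    rw [hUt x t, hW1 x t, clP x t, hptx x t, hpt x t, heq2 x t]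
    ring
  · intro x t
    rw [hWt x t, hUsq x t, hU3 x t, clQ2 x t, hqtxx x t, clQ x t, hqtx x t, clP x t,
      hptx x t, hpt x t, heq2 x t, hU1 x t, hu x t]
    ring
end

section
/- Define log₀ : ℂ∖{0} → ℂ by log₀(z) = ln|z| + i·arg₀(z) with arg₀(z) ∈ [0, 2π). Let h : [0,∞) → ℝ be continuously differentiable with h' continuous, bounded, and integrable on [0,∞). Define χ(k) := (1/(2πi)) ∫₀^∞ log₀(k − s)·h'(s) ds for k ∈ ℂ∖[0,∞), and χ(0) := (1/(2πi)) ∫₀^∞ (ln s + iπ)·h'(s) ds. Then for every θ₀ ∈ (0, π) there exists a constant C > 0 such that for all k with 0 < |k| ≤ 1/4 and θ₀ ≤ arg₀(k) ≤ 2π − θ₀, one has |χ(k) − χ(0)| ≤ C·|k|·(1 + |ln|k||). -/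
/-!
For `s > 0` and `k` off the cut, `log₀(k - s) - (ln s + iπ) = Log(1 - k/s)` with the principal
logarithm, so `χ(k) - χ(0) = (2πi)⁻¹ ∫₀^∞ Log(1 - k/s) h'(s) ds`. Non-tangential approach means
`Re k ≤ |k| cos θ₀`, which keeps `|s - k| ≥ |k| sin θ₀` for all `s ≥ 0`. Split the integral at
`s = 2|k|` and `s = 1`. Near zero, `|Log(1 - k/s)| ≤ |ln |k|| + O(1) - ln s` is integrated
against the bounded `h'`. For `s ≥ 2|k|`, `|Log(1 - k/s)| ≤ (3/2)|k|/s`, which contributes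
`O(|k| |ln |k||)` on `[2|k|, 1]` (`h'` bounded) and `O(|k|)` beyond `1` (`h'` integrable).
-/

open MeasureTheory Complex

/-- The argument normalized to `[0, 2π)`. -/
noncomputable def arg0 (z : ℂ) : ℝ :=
  if 0 ≤ Complex.arg z then Complex.arg z else Complex.arg z + 2 * Real.pi

/-- The logarithm `log₀` with branch cut along the positive real axis:
`log₀(z) = ln|z| + i·arg₀(z)` with `arg₀(z) ∈ [0, 2π)`. -/
noncomputable def log0 (z : ℂ) : ℂ :=
  (Real.log (‖z‖) : ℂ) + (arg0 z : ℂ) * Complex.I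

open Set
open scoped Real

lemma arg0_eq_arg_neg_add_pi {z : ℂ} (hz : z.im ≠ 0 ∨ z.re < 0) : arg0 z = arg (-z) + π := by
  rcases lt_or_ge z.im 0 with him | him
  · rw [arg0, if_neg (by simpa [arg_nonneg_iff] using him), arg_neg_eq_arg_add_pi_of_im_neg him]
    ring
  · have : 0 < z.im ∨ z.im = 0 ∧ z.re < 0 := by
      rcases him.lt_or_eq with h | h
      · exact .inl h
      · exact .inr ⟨h.symm, hz.resolve_left (by simp [h])⟩
    rw [arg0, if_pos (arg_nonneg_iff.2 him), arg_neg_eq_arg_sub_pi_iff.2 this]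
    ring

lemma log0_eq_log_neg_add_pi_mul_I {z : ℂ} (hz : z.im ≠ 0 ∨ z.re < 0) :
    log0 z = log (-z) + π * I := by
  rw [log0, arg0_eq_arg_neg_add_pi hz, log, norm_neg]
  push_cast
  ring

lemma log0_sub_ofReal_sub_log_eq {k : ℂ} (hk : k.im ≠ 0 ∨ k.re < 0) {s : ℝ} (hs : 0 < s) :
    log0 (k - s) - (Real.log s + π * I) = log (1 - k / s) := by
  have hks : (k - s).im ≠ 0 ∨ (k - s).re < 0 := by
    simpa using hk.imp_right fun h => by linarith
  have hs' : (s : ℂ) ≠ 0 := by exact_mod_cast hs.ne'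
  have hfac : (s : ℂ) - k = s * (1 - k / s) := by field_simp
  have hne : 1 - k / s ≠ 0 := by
    refine right_ne_zero_of_mul (hfac ▸ sub_ne_zero.2 fun h => ?_)
    simp [h] at hks
  rw [log0_eq_log_neg_add_pi_mul_I hks, neg_sub, hfac, log_ofReal_mul hs hne]
  ring

lemma norm_log_le (w : ℂ) : ‖log w‖ ≤ |Real.log ‖w‖| + π := by
  have := norm_le_abs_re_add_abs_im (log w)
  rw [log_re, log_im] at this
  linarith [abs_arg_le_pi w]

lemma cos_arg0 (z : ℂ) : Real.cos (arg0 z) = Real.cos (arg z) := by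
  unfold arg0
  split_ifs <;> simp [Real.cos_add_two_pi]

lemma cos_le_cos_of_le_of_le_two_pi_sub {θ φ : ℝ} (hθ : 0 ≤ θ) (h₁ : θ ≤ φ)
    (h₂ : φ ≤ 2 * π - θ) : Real.cos φ ≤ Real.cos θ := by
  rcases le_total φ π with hφ | hφ
  · exact Real.cos_le_cos_of_nonneg_of_le_pi hθ hφ h₁
  · rw [← Real.cos_two_pi_sub φ]
    exact Real.cos_le_cos_of_nonneg_of_le_pi hθ (by linarith) (by linarith)

lemma re_le_norm_mul_cos_of_arg0_mem {θ : ℝ} (hθ : 0 ≤ θ) {k : ℂ} (h₁ : θ ≤ arg0 k)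
    (h₂ : arg0 k ≤ 2 * π - θ) : k.re ≤ ‖k‖ * Real.cos θ := by
  rw [← norm_mul_cos_arg k, ← cos_arg0]
  exact mul_le_mul_of_nonneg_left (cos_le_cos_of_le_of_le_two_pi_sub hθ h₁ h₂) (norm_nonneg k)

/- `|s - k|² ≥ (s - |k| cos θ)² + |k|² sin² θ`, because `s ≥ 0` and `Re k ≤ |k| cos θ`. -/
lemma sin_mul_norm_le_norm_ofReal_sub {θ : ℝ} (hθ : 0 ≤ Real.sin θ) {k : ℂ}
    (hk : k.re ≤ ‖k‖ * Real.cos θ) {s : ℝ} (hs : 0 ≤ s) :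
    Real.sin θ * ‖k‖ ≤ ‖(s : ℂ) - k‖ := by
  rw [← pow_le_pow_iff_left₀ (by positivity) (norm_nonneg _) two_ne_zero, Complex.sq_norm,
    normSq_apply]
  simp only [sub_re, sub_im, ofReal_re, ofReal_im]
  have := Real.sin_sq_add_cos_sq θ
  nlinarith [sq_nonneg (s - ‖k‖ * Real.cos θ), Complex.sq_norm k, normSq_apply k]

lemma im_ne_zero_or_re_neg_of_re_lt_norm {k : ℂ} (hk : k.re < ‖k‖) : k.im ≠ 0 ∨ k.re < 0 := by
  refine or_iff_not_imp_left.2 fun him => ?_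
  rw [← abs_re_eq_norm.2 (not_not.1 him)] at hk
  exact not_le.1 fun h => hk.ne (abs_of_nonneg h).symm

lemma abs_log_le_of_mul_le_of_le_mul {a b x y : ℝ} (ha : 0 < a) (hx : 0 < x) (h₁ : a * x ≤ y)
    (h₂ : y ≤ b * x) : |Real.log y| ≤ |Real.log x| + |Real.log a| + |Real.log b| := by
  have hb : 0 < b := pos_of_mul_pos_left ((mul_pos ha hx).trans_le (h₁.trans h₂)) hx.le
  have hlow := Real.log_le_log (mul_pos ha hx) h₁
  have hhigh := Real.log_le_log ((mul_pos ha hx).trans_le h₁) h₂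
  rw [Real.log_mul ha.ne' hx.ne'] at hlow
  rw [Real.log_mul hb.ne' hx.ne'] at hhigh
  rw [abs_le]
  constructor <;> linarith [neg_abs_le (Real.log a), neg_abs_le (Real.log x),
    le_abs_self (Real.log b), le_abs_self (Real.log x), abs_nonneg (Real.log a),
    abs_nonneg (Real.log b)]

lemma norm_ofReal_div (z : ℂ) {s : ℝ} (hs : 0 < s) : ‖z / s‖ = ‖z‖ / s := by
  rw [norm_div, norm_real, Real.norm_of_nonneg hs.le]

lemma norm_log_one_sub_div_le_of_le_two_mul {c : ℝ} (hc : 0 < c) {k : ℂ} (hk : k ≠ 0) {s : ℝ}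
    (hs : 0 < s) (hs₁ : s ≤ 1) (hsk : s ≤ 2 * ‖k‖) (hdist : c * ‖k‖ ≤ ‖(s : ℂ) - k‖) :
    ‖log (1 - k / s)‖ ≤ |Real.log ‖k‖| + |Real.log c| + Real.log 3 + π - Real.log s := by
  have hs' : (s : ℂ) ≠ 0 := by exact_mod_cast hs.ne'
  have hnorm : ‖1 - k / s‖ = ‖(s : ℂ) - k‖ / s := by
    rw [← norm_ofReal_div _ hs, sub_div, div_self hs']
  have hupper : ‖(s : ℂ) - k‖ ≤ 3 * ‖k‖ := by
    calc ‖(s : ℂ) - k‖ ≤ ‖(s : ℂ)‖ + ‖k‖ := norm_sub_le _ _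
      _ ≤ 3 * ‖k‖ := by rw [norm_real, Real.norm_of_nonneg hs.le]; linarith
  have hk' : 0 < ‖k‖ := norm_pos_iff.2 hk
  have hlog := abs_log_le_of_mul_le_of_le_mul hc hk' hdist hupper
  rw [abs_of_nonneg (Real.log_nonneg (by norm_num : (1 : ℝ) ≤ 3))] at hlog
  have hsk_pos : 0 < ‖(s : ℂ) - k‖ := (mul_pos hc hk').trans_le hdist
  calc ‖log (1 - k / s)‖ ≤ |Real.log ‖1 - k / s‖| + π := norm_log_le _
    _ = |Real.log ‖(s : ℂ) - k‖ - Real.log s| + π := by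
        rw [hnorm, Real.log_div hsk_pos.ne' hs.ne']
    _ ≤ |Real.log ‖(s : ℂ) - k‖| + |Real.log s| + π := by gcongr; exact abs_sub _ _
    _ ≤ _ := by rw [abs_of_nonpos (Real.log_nonpos hs.le hs₁)]; linarith

lemma norm_log_one_sub_div_le_of_two_mul_le {k : ℂ} {s : ℝ} (hs : 0 < s) (hsk : 2 * ‖k‖ ≤ s) :
    ‖log (1 - k / s)‖ ≤ 3 / 2 * (‖k‖ / s) := by
  have hsmall : ‖-(k / s)‖ ≤ 1 / 2 := by
    rw [norm_neg, norm_ofReal_div _ hs, div_le_iff₀ hs]; linarith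
  have := norm_log_one_add_half_le_self hsmall
  rwa [← sub_eq_add_neg, norm_neg, norm_ofReal_div _ hs] at this

lemma integrableOn_log_Ioc (a b : ℝ) : IntegrableOn Real.log (Ioc a b) :=
  intervalIntegral.intervalIntegrable_log'.1

lemma setIntegral_Ioc_zero_log {ε : ℝ} (hε : 0 ≤ ε) :
    ∫ s in Ioc 0 ε, Real.log s = ε * Real.log ε - ε := by
  rw [← intervalIntegral.integral_of_le hε, integral_log]
  simp

lemma integrableOn_inv_Ioc {a b : ℝ} (ha : 0 < a) : IntegrableOn (fun s : ℝ => s⁻¹) (Ioc a b) :=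
  (continuousOn_inv₀.mono fun _ hs => (ha.trans_le hs.1).ne').integrableOn_Icc.mono_set
    Ioc_subset_Icc_self

lemma setIntegral_Ioc_inv {ε : ℝ} (hε : 0 < ε) (hε₁ : ε ≤ 1) :
    ∫ s in Ioc ε 1, s⁻¹ = -Real.log ε := by
  rw [← intervalIntegral.integral_of_le hε₁, integral_inv_of_pos hε one_pos, one_div,
    Real.log_inv]

/- If `f₂` is not integrable then neither is `f₁`, and both Bochner integrals are `0`. -/
lemma norm_integral_sub_integral_le {α E : Type*} [MeasurableSpace α] [NormedAddCommGroup E]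
    [NormedSpace ℝ E] {μ : Measure α} {f₁ f₂ d : α → E} (hd : Integrable d μ)
    (hfd : ∀ᵐ x ∂μ, f₁ x - f₂ x = d x) :
    ‖∫ x, f₁ x ∂μ - ∫ x, f₂ x ∂μ‖ ≤ ∫ x, ‖d x‖ ∂μ := by
  have hsub : Integrable (f₁ - f₂) μ := hd.congr (hfd.mono fun x hx => hx.symm)
  by_cases hf₂ : Integrable f₂ μ
  · rw [← integral_sub (by simpa using hsub.add hf₂) hf₂]
    exact (norm_integral_le_integral_norm _).trans_eq
      (integral_congr_ae (hfd.mono fun x hx => by simp [hx]))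
  · have hf₁ : ¬Integrable f₁ μ := fun hf₁ => hf₂ (by simpa using hf₁.sub hsub)
    rw [integral_undef hf₁, integral_undef hf₂, sub_zero, norm_zero]
    exact integral_nonneg fun _ => norm_nonneg _

lemma integrableOn_and_integral_norm_le_of_norm_le {α E : Type*} [MeasurableSpace α]
    [NormedAddCommGroup E] {μ : Measure α} {S : Set α} {f : α → E} {φ : α → ℝ}
    (hS : MeasurableSet S) (hf : AEStronglyMeasurable f (μ.restrict S)) (hφ : IntegrableOn φ S μ)
    (hle : ∀ x ∈ S, ‖f x‖ ≤ φ x) :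
    IntegrableOn f S μ ∧ ∫ x in S, ‖f x‖ ∂μ ≤ ∫ x in S, φ x ∂μ := by
  have hfi : IntegrableOn f S μ := hφ.mono' hf (ae_restrict_of_forall_mem hS hle)
  exact ⟨hfi, setIntegral_mono_on hfi.norm hφ hS hle⟩

section Pieces

variable {g : ℝ → ℝ} {M : ℝ} {k : ℂ}

lemma aestronglyMeasurable_log_one_sub_div_mul {μ : Measure ℝ} (hg : AEStronglyMeasurable g μ) :
    AEStronglyMeasurable (fun s : ℝ => log (1 - k / s) * g s) μ :=
  (Measurable.aestronglyMeasurable (by fun_prop)).mul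
    (continuous_ofReal.comp_aestronglyMeasurable hg)

lemma integrableOn_and_integral_norm_log_one_sub_div_mul_le_near {c : ℝ} (hc : 0 < c)
    (hbd : ∀ s ∈ Ioi (0 : ℝ), |g s| ≤ M) (hint : IntegrableOn g (Ioi (0 : ℝ))) (hk : k ≠ 0)
    (hk₁ : ‖k‖ ≤ 1 / 2) (hdist : ∀ s ∈ Ioi (0 : ℝ), c * ‖k‖ ≤ ‖(s : ℂ) - k‖) :
    IntegrableOn (fun s : ℝ => log (1 - k / s) * g s) (Ioc 0 (2 * ‖k‖)) ∧
      ∫ s in Ioc 0 (2 * ‖k‖), ‖log (1 - k / s) * g s‖ ≤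
        M * (2 * ‖k‖) * (|Real.log ‖k‖| + |Real.log c| + Real.log 3 + π + 1
          - Real.log (2 * ‖k‖)) := by
  set A := |Real.log ‖k‖| + |Real.log c| + Real.log 3 + π
  have hε : 0 ≤ 2 * ‖k‖ := by positivity
  have hbound : ∀ s ∈ Ioc 0 (2 * ‖k‖), ‖log (1 - k / s) * g s‖ ≤ M * (A - Real.log s) := by
    intro s ⟨hs, hsk⟩
    rw [norm_mul, norm_real, Real.norm_eq_abs, mul_comm]
    exact mul_le_mul (hbd s hs)
      (norm_log_one_sub_div_le_of_le_two_mul hc hk hs (by linarith) hsk (hdist s hs))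
      (norm_nonneg _) ((abs_nonneg _).trans (hbd s hs))
  have hconst : IntegrableOn (fun _ : ℝ => A) (Ioc 0 (2 * ‖k‖)) :=
    integrableOn_const measure_Ioc_lt_top.ne
  refine (integrableOn_and_integral_norm_le_of_norm_le (φ := fun s => M * (A - Real.log s))
    measurableSet_Ioc
    (aestronglyMeasurable_log_one_sub_div_mul (hint.mono_set Ioc_subset_Ioi_self).1)
    ((hconst.sub (integrableOn_log_Ioc _ _)).const_mul M) hbound).imp_right
    fun h => h.trans_eq ?_
  rw [integral_const_mul, integral_sub hconst (integrableOn_log_Ioc _ _), setIntegral_const,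
    setIntegral_Ioc_zero_log hε, Real.volume_real_Ioc_of_le hε, smul_eq_mul]
  ring

lemma integrableOn_and_integral_norm_log_one_sub_div_mul_le_middle
    (hbd : ∀ s ∈ Ioi (0 : ℝ), |g s| ≤ M) (hint : IntegrableOn g (Ioi (0 : ℝ))) (hk : k ≠ 0)
    (hk₁ : ‖k‖ ≤ 1 / 2) :
    IntegrableOn (fun s : ℝ => log (1 - k / s) * g s) (Ioc (2 * ‖k‖) 1) ∧
      ∫ s in Ioc (2 * ‖k‖) 1, ‖log (1 - k / s) * g s‖ ≤
        3 / 2 * M * ‖k‖ * -Real.log (2 * ‖k‖) := by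
  have hε : 0 < 2 * ‖k‖ := by positivity
  have hbound : ∀ s ∈ Ioc (2 * ‖k‖) 1,
      ‖log (1 - k / s) * g s‖ ≤ 3 / 2 * M * ‖k‖ * s⁻¹ := by
    intro s ⟨hks, _⟩
    have hs : 0 < s := hε.trans hks
    rw [norm_mul, norm_real, Real.norm_eq_abs]
    calc ‖log (1 - k / s)‖ * |g s| ≤ 3 / 2 * (‖k‖ / s) * M :=
          mul_le_mul (norm_log_one_sub_div_le_of_two_mul_le hs hks.le) (hbd s hs)
            (abs_nonneg _) (by positivity)
      _ = 3 / 2 * M * ‖k‖ * s⁻¹ := by ring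
  refine (integrableOn_and_integral_norm_le_of_norm_le measurableSet_Ioc
    (aestronglyMeasurable_log_one_sub_div_mul
      (hint.mono_set fun s hs => hε.trans hs.1).1)
    ((integrableOn_inv_Ioc hε).const_mul _) hbound).imp_right fun h => h.trans_eq ?_
  rw [integral_const_mul, setIntegral_Ioc_inv hε (by linarith)]

lemma integrableOn_and_integral_norm_log_one_sub_div_mul_le_tail
    (hint : IntegrableOn g (Ioi (0 : ℝ))) (hk₁ : ‖k‖ ≤ 1 / 2) :
    IntegrableOn (fun s : ℝ => log (1 - k / s) * g s) (Ioi (1 : ℝ)) ∧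
      ∫ s in Ioi (1 : ℝ), ‖log (1 - k / s) * g s‖ ≤ 3 / 2 * ‖k‖ * ∫ s in Ioi (0 : ℝ), |g s| := by
  have hsub : Ioi (1 : ℝ) ⊆ Ioi 0 := Ioi_subset_Ioi zero_le_one
  have hbound : ∀ s ∈ Ioi (1 : ℝ), ‖log (1 - k / s) * g s‖ ≤ 3 / 2 * ‖k‖ * |g s| := by
    intro s (hs : 1 < s)
    rw [norm_mul, norm_real, Real.norm_eq_abs]
    have hlog := norm_log_one_sub_div_le_of_two_mul_le (k := k) (by linarith) (by linarith)
    have hks : ‖k‖ / s ≤ ‖k‖ := div_le_self (norm_nonneg k) hs.le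
    gcongr
    linarith
  refine (integrableOn_and_integral_norm_le_of_norm_le measurableSet_Ioi
    (aestronglyMeasurable_log_one_sub_div_mul (hint.mono_set hsub).1)
    ((hint.mono_set hsub).abs.const_mul _) hbound).imp_right fun h => h.trans ?_
  rw [integral_const_mul]
  exact mul_le_mul_of_nonneg_left (setIntegral_mono_set hint.abs
    (ae_of_all _ fun _ => abs_nonneg _) hsub.eventuallyLE) (by positivity)

end Pieces

theorem integrableOn_and_integral_norm_log_one_sub_div_mul_le {g : ℝ → ℝ} {M c : ℝ} {k : ℂ}
    (hc : 0 < c) (hbd : ∀ s ∈ Ioi (0 : ℝ), |g s| ≤ M) (hint : IntegrableOn g (Ioi (0 : ℝ)))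
    (hk : k ≠ 0) (hk₁ : ‖k‖ ≤ 1 / 2) (hdist : ∀ s ∈ Ioi (0 : ℝ), c * ‖k‖ ≤ ‖(s : ℂ) - k‖) :
    IntegrableOn (fun s : ℝ => log (1 - k / s) * g s) (Ioi 0) ∧
      ∫ s in Ioi (0 : ℝ), ‖log (1 - k / s) * g s‖ ≤
        (M * (2 * (|Real.log c| + Real.log 3 + π) + 6) + 2 * ∫ s in Ioi (0 : ℝ), |g s|) *
          ‖k‖ * (1 + |Real.log ‖k‖|) := by
  obtain ⟨hi₁, hb₁⟩ :=
    integrableOn_and_integral_norm_log_one_sub_div_mul_le_near hc hbd hint hk hk₁ hdist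
  obtain ⟨hi₂, hb₂⟩ := integrableOn_and_integral_norm_log_one_sub_div_mul_le_middle hbd hint hk hk₁
  obtain ⟨hi₃, hb₃⟩ := integrableOn_and_integral_norm_log_one_sub_div_mul_le_tail hint hk₁
  have hr : 0 < ‖k‖ := norm_pos_iff.2 hk
  have hunion : Ioi (0 : ℝ) = Ioc 0 (2 * ‖k‖) ∪ (Ioc (2 * ‖k‖) 1 ∪ Ioi 1) := by
    rw [Ioc_union_Ioi_eq_Ioi (by linarith), Ioc_union_Ioi_eq_Ioi (by positivity)]
  have hi := hi₁.union (hi₂.union hi₃)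
  rw [← hunion] at hi
  refine ⟨hi, ?_⟩
  have hsplit : ∫ s in Ioi (0 : ℝ), ‖log (1 - k / s) * g s‖ =
      (∫ s in Ioc 0 (2 * ‖k‖), ‖log (1 - k / s) * g s‖) +
        ((∫ s in Ioc (2 * ‖k‖) 1, ‖log (1 - k / s) * g s‖) +
          ∫ s in Ioi (1 : ℝ), ‖log (1 - k / s) * g s‖) := by
    have hdisj : Disjoint (Ioc 0 (2 * ‖k‖)) (Ioc (2 * ‖k‖) 1 ∪ Ioi 1) :=
      Ioc_disjoint_Ioi_same.mono_right
        (union_subset (fun _ hs => hs.1) (Ioi_subset_Ioi (by linarith)))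
    rw [hunion, setIntegral_union hdisj (measurableSet_Ioc.union measurableSet_Ioi) hi₁.norm
      (hi₂.union hi₃).norm, setIntegral_union Ioc_disjoint_Ioi_same measurableSet_Ioi hi₂.norm
      hi₃.norm]
  set L := |Real.log ‖k‖|
  set K := |Real.log c| + Real.log 3 + π
  set G := ∫ s in Ioi (0 : ℝ), |g s|
  have hM : 0 ≤ M := (abs_nonneg _).trans (hbd 1 (mem_Ioi.2 one_pos))
  have hG : 0 ≤ G := setIntegral_nonneg measurableSet_Ioi fun _ _ => abs_nonneg _
  have hL : 0 ≤ L := abs_nonneg _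
  have hK : 0 ≤ K := by
    have := Real.log_nonneg (by norm_num : (1 : ℝ) ≤ 3)
    positivity
  have hlog : -Real.log (2 * ‖k‖) ≤ L := by
    rw [Real.log_mul two_ne_zero hr.ne']
    linarith [Real.log_nonneg one_le_two, neg_le_abs (Real.log ‖k‖)]
  have hMr : 0 ≤ M * ‖k‖ := by positivity
  rw [hsplit]
  nlinarith [mul_le_mul_of_nonneg_left hlog hMr, mul_nonneg hMr hL,
    mul_nonneg (mul_nonneg hMr hK) hL, mul_nonneg hr.le hG, mul_nonneg (mul_nonneg hr.le hG) hL]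

theorem chi_nontangential_estimate_general
    (g : ℝ → ℝ)
    (M : ℝ) (hbd : ∀ s ∈ Set.Ici (0:ℝ), |g s| ≤ M)
    (hint : IntegrableOn g (Set.Ici (0:ℝ)))
    (χ : ℂ → ℂ)
    (hχ : ∀ k : ℂ, (k.im ≠ 0 ∨ k.re < 0) →
      χ k = (1 / (2 * Real.pi * Complex.I)) *
        ∫ s in Set.Ioi (0:ℝ), log0 (k - (s : ℂ)) * (g s : ℂ))
    (χ0 : ℂ)
    (hχ0 : χ0 = (1 / (2 * Real.pi * Complex.I)) *
      ∫ s in Set.Ioi (0:ℝ), ((Real.log s : ℂ) + Real.pi * Complex.I) * (g s : ℂ)) :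
    ∀ θ₀ ∈ Set.Ioo (0:ℝ) Real.pi, ∃ C : ℝ, 0 < C ∧
      ∀ k : ℂ, 0 < ‖k‖ → ‖k‖ ≤ 1/4 →
        θ₀ ≤ arg0 k → arg0 k ≤ 2 * Real.pi - θ₀ →
        ‖χ k - χ0‖
          ≤ C * ‖k‖ * (1 + |Real.log (‖k‖)|) := by
  rintro θ₀ ⟨hθ₀, hθ₀π⟩
  have hsin : 0 < Real.sin θ₀ := Real.sin_pos_of_pos_of_lt_pi hθ₀ hθ₀π
  have hcos : Real.cos θ₀ < 1 := by
    simpa using Real.cos_lt_cos_of_nonneg_of_le_pi le_rfl hθ₀π.le hθ₀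
  set C := M * (2 * (|Real.log (Real.sin θ₀)| + Real.log 3 + π) + 6) +
    2 * ∫ s in Ioi (0 : ℝ), |g s|
  refine ⟨max C 1, lt_max_of_lt_right one_pos, fun k hk hk₁ harg₁ harg₂ => ?_⟩
  have hre := re_le_norm_mul_cos_of_arg0_mem hθ₀.le harg₁ harg₂
  have hcut : k.im ≠ 0 ∨ k.re < 0 := im_ne_zero_or_re_neg_of_re_lt_norm <|
    hre.trans_lt (mul_lt_of_lt_one_right hk hcos)
  obtain ⟨hi, hle⟩ := integrableOn_and_integral_norm_log_one_sub_div_mul_le hsin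
    (fun s hs => hbd s (Ioi_subset_Ici_self hs)) (hint.mono_set Ioi_subset_Ici_self)
    (norm_pos_iff.1 hk) (by linarith) fun s hs => sin_mul_norm_le_norm_ofReal_sub hsin.le hre hs.le
  have hdiff := norm_integral_sub_integral_le hi <| ae_restrict_of_forall_mem measurableSet_Ioi
    fun s hs => by rw [← sub_mul, log0_sub_ofReal_sub_log_eq hcut hs]
  have hfactor : ‖1 / (2 * (π : ℂ) * I)‖ ≤ 1 := by
    simp only [norm_div, norm_one, norm_mul, Complex.norm_two, norm_real, norm_I, mul_one,
      Real.norm_of_nonneg Real.pi_pos.le]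
    exact (div_le_one (by positivity)).2 (by linarith [Real.pi_gt_three])
  rw [hχ k hcut, hχ0, ← mul_sub, norm_mul]
  calc _ ≤ 1 * (C * ‖k‖ * (1 + |Real.log ‖k‖|)) :=
        mul_le_mul hfactor (hdiff.trans hle) (norm_nonneg _) zero_le_one
    _ ≤ max C 1 * ‖k‖ * (1 + |Real.log ‖k‖|) := by
        rw [one_mul]; gcongr; exact le_max_left _ _

/-- Non-tangential Hölder-type estimate for the Cauchy-type integral
`χ(k) = (1/(2πi)) ∫₀^∞ log₀(k − s) h'(s) ds` near `k = 0`: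
`|χ(k) − χ(0)| ≤ C |k| (1 + |ln|k||)` as `k → 0` non-tangentially to `(0,∞)`. -/
theorem chi_nontangential_estimate
    (h g : ℝ → ℝ)
    (hderiv : ∀ s ∈ Set.Ici (0:ℝ), HasDerivAt h (g s) s)
    (hcont : ContinuousOn g (Set.Ici (0:ℝ)))
    (M : ℝ) (hbd : ∀ s ∈ Set.Ici (0:ℝ), |g s| ≤ M)
    (hint : IntegrableOn g (Set.Ici (0:ℝ)))
    (χ : ℂ → ℂ)
    (hχ : ∀ k : ℂ, (k.im ≠ 0 ∨ k.re < 0) →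
      χ k = (1 / (2 * Real.pi * Complex.I)) *
        ∫ s in Set.Ioi (0:ℝ), log0 (k - (s : ℂ)) * (g s : ℂ))
    (χ0 : ℂ)
    (hχ0 : χ0 = (1 / (2 * Real.pi * Complex.I)) *
      ∫ s in Set.Ioi (0:ℝ), ((Real.log s : ℂ) + Real.pi * Complex.I) * (g s : ℂ)) :
    ∀ θ₀ ∈ Set.Ioo (0:ℝ) Real.pi, ∃ C : ℝ, 0 < C ∧
      ∀ k : ℂ, 0 < ‖k‖ → ‖k‖ ≤ 1/4 →
        θ₀ ≤ arg0 k → arg0 k ≤ 2 * Real.pi - θ₀ →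
        ‖χ k - χ0‖
          ≤ C * ‖k‖ * (1 + |Real.log (‖k‖)|) :=
  chi_nontangential_estimate_general g M hbd hint χ hχ χ0 hχ0
end

section
/- Let I ⊆ ℝ be an open interval and let f, g : I → ℝ be differentiable functions satisfying for all y ∈ I the system 18·f(y)·g(y) + (2y/√3)·f(y) + g'(y) = 0 and f'(y) − 9·f(y)² + 9·g(y)² − (2y/√3)·g(y) = 0. Define P : I → ℝ by P(y) := −6√3·g(y) − 2y/3, and assume P(y) ≠ 0 for all y ∈ I. Then P is twice differentiable on I and satisfies the Painlevé IV equation P''(y) = (P'(y))²/(2P(y)) + (3/2)·P(y)³ + 4y·P(y)² + 2y²·P(y) − 2/(9·P(y)), i.e., the Painlevé IV equation with parameters α = −1/6 and β = −2/3. -/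
/-! Substituting `√3·g = -(P + 2y/3)/6` into the system, the first equation becomes
`P' = -18 f P - 2/3` and the second expresses `f'` through `f`, `P` and `y`.
Differentiating the first relation once more and eliminating `f = -(P' + 2/3)/(18 P)`
leaves a rational identity in `P`, `P'` and `y`, which is Painlevé IV. -/

open Real

section PainleveSystem

variable {f g f' g' P : ℝ → ℝ} {y : ℝ}

theorem hasDerivAt_of_system_first_eq (hg : HasDerivAt g (g' y) y)
    (heq1 : 18 * f y * g y + (2 * y / √3) * f y + g' y = 0)
    (hP : ∀ y, P y = -6 * √3 * g y - 2 * y / 3) :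
    HasDerivAt P (-18 * f y * P y - 2 / 3) y := by
  have hD : HasDerivAt P (-6 * √3 * g' y - 2 * 1 / 3) y := by
    rw [funext hP]
    exact (hg.const_mul (-6 * √3)).sub (((hasDerivAt_id y).const_mul 2).div_const 3)
  convert hD using 1
  field_simp at heq1
  linear_combination (-18 * f y) * hP y + 6 * heq1

theorem riccati_of_system_second_eq
    (heq2 : f' y - 9 * f y ^ 2 + 9 * g y ^ 2 - (2 * y / √3) * g y = 0)
    (hP : ∀ y, P y = -6 * √3 * g y - 2 * y / 3) :
    f' y = 9 * f y ^ 2 - (P y + 2 * y / 3) ^ 2 / 12 - y * (P y + 2 * y / 3) / 9 := by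
  have hs2 : √3 ^ 2 = 3 := sq_sqrt (by norm_num)
  have hdiv : 2 * y / √3 = 2 * y * √3 / 3 := by field_simp; norm_num
  rw [hdiv] at heq2
  rw [hP y]
  linear_combination heq2 + 3 * g y ^ 2 * hs2

end PainleveSystem

theorem painleveIV_of_relations {p p' p'' u v y : ℝ} (hp : p ≠ 0)
    (hp' : p' = -18 * u * p - 2 / 3) (hp'' : p'' = -18 * v * p - 18 * u * p')
    (hv : v = 9 * u ^ 2 - (p + 2 * y / 3) ^ 2 / 12 - y * (p + 2 * y / 3) / 9) :
    p'' = p' ^ 2 / (2 * p) + (3 / 2) * p ^ 3 + 4 * y * p ^ 2 + 2 * y ^ 2 * p - 2 / (9 * p) := by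
  subst hp' hp'' hv
  field_simp
  ring

theorem system_to_painleve_IV_general
    (I : Set ℝ)
    (f g f' g' : ℝ → ℝ)
    (hf : ∀ y ∈ I, HasDerivAt f (f' y) y)
    (hg : ∀ y ∈ I, HasDerivAt g (g' y) y)
    (heq1 : ∀ y ∈ I,
      18 * f y * g y + (2 * y / Real.sqrt 3) * f y + g' y = 0)
    (heq2 : ∀ y ∈ I,
      f' y - 9 * (f y)^2 + 9 * (g y)^2 - (2 * y / Real.sqrt 3) * g y = 0)
    (P : ℝ → ℝ)
    (hP : ∀ y, P y = -6 * Real.sqrt 3 * g y - 2 * y / 3)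
    (hPne : ∀ y ∈ I, P y ≠ 0) :
    ∃ P' P'' : ℝ → ℝ,
      (∀ y ∈ I, HasDerivAt P (P' y) y) ∧
      (∀ y ∈ I, HasDerivAt P' (P'' y) y) ∧
      (∀ y ∈ I, P'' y = (P' y)^2 / (2 * P y) + (3/2) * (P y)^3
        + 4 * y * (P y)^2 + 2 * y^2 * P y - 2 / (9 * P y)) := by
  set P' : ℝ → ℝ := fun y => -18 * f y * P y - 2 / 3
  have hP' : ∀ y ∈ I, HasDerivAt P (P' y) y := fun y hy =>
    hasDerivAt_of_system_first_eq (hg y hy) (heq1 y hy) hP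
  refine ⟨P', fun y => -18 * f' y * P y - 18 * f y * P' y, hP', fun y hy => ?_, fun y hy => ?_⟩
  · exact (((hf y hy).const_mul (-18)).mul (hP' y hy)).sub_const (2 / 3) |>.congr_deriv (by ring)
  · exact painleveIV_of_relations (hPne y hy) rfl rfl (riccati_of_system_second_eq (heq2 y hy) hP)

/-- If `(f,g)` solve the first-order system
`18fg + (2y/√3)f + g' = 0`, `f' − 9f² + 9g² − (2y/√3)g = 0` on an open
interval `I`, then `P(y) = −6√3·g(y) − 2y/3` (assumed nonvanishing on `I`) is
twice differentiable and satisfies the Painlevé IV equation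
`P'' = (P')²/(2P) + (3/2)P³ + 4yP² + 2y²P − 2/(9P)`
(parameters `α = −1/6`, `β = −2/3`). -/
theorem system_to_painleve_IV
    (I : Set ℝ) (hIopen : IsOpen I) (hIconn : I.OrdConnected)
    (f g f' g' : ℝ → ℝ)
    (hf : ∀ y ∈ I, HasDerivAt f (f' y) y)
    (hg : ∀ y ∈ I, HasDerivAt g (g' y) y)
    (heq1 : ∀ y ∈ I,
      18 * f y * g y + (2 * y / Real.sqrt 3) * f y + g' y = 0)
    (heq2 : ∀ y ∈ I,
      f' y - 9 * (f y)^2 + 9 * (g y)^2 - (2 * y / Real.sqrt 3) * g y = 0)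
    (P : ℝ → ℝ)
    (hP : ∀ y, P y = -6 * Real.sqrt 3 * g y - 2 * y / 3)
    (hPne : ∀ y ∈ I, P y ≠ 0) :
    ∃ P' P'' : ℝ → ℝ,
      (∀ y ∈ I, HasDerivAt P (P' y) y) ∧
      (∀ y ∈ I, HasDerivAt P' (P'' y) y) ∧
      (∀ y ∈ I, P'' y = (P' y)^2 / (2 * P y) + (3/2) * (P y)^3
        + 4 * y * (P y)^2 + 2 * y^2 * P y - 2 / (9 * P y)) :=
  system_to_painleve_IV_general I f g f' g' hf hg heq1 heq2 P hP hPne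
end

section
/- Let s₁, s₂, s₃, s₄ be complex numbers and define the 3×3 complex matrices M₁ = [[1,0,0],[s₁,1,s₃],[0,0,1]], M₂ = [[1,0,0],[0,1,0],[s₂,s₄,1]], M₃ = [[1,s₃,s₁],[0,1,0],[0,0,1]], M₄ = [[1,0,0],[s₄,1,s₂],[0,0,1]], M₅ = [[1,0,0],[0,1,0],[s₃,s₁,1]], M₆ = [[1,s₂,s₄],[0,1,0],[0,0,1]]. If M₁·M₂·M₃·M₄·M₅·M₆ equals the 3×3 identity matrix, then s₄ + s₁ + s₂·s₃ = 0 and s₃ + s₂ + s₁² + s₁·s₂·s₃ = 0. -/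
/-- The cyclic consistency condition `M₁M₂M₃M₄M₅M₆ = I` for the constant parts
of the jump matrices of the Painlevé IV model Riemann–Hilbert problem implies
the constraints `s₄ + s₁ + s₂s₃ = 0` and `s₃ + s₂ + s₁² + s₁s₂s₃ = 0` on the
Stokes-type parameters. -/
theorem stokes_parameter_constraints
    (s₁ s₂ s₃ s₄ : ℂ)
    (hprod :
      (!![1, 0, 0; s₁, 1, s₃; 0, 0, 1] : Matrix (Fin 3) (Fin 3) ℂ) *
        !![1, 0, 0; 0, 1, 0; s₂, s₄, 1] *
        !![1, s₃, s₁; 0, 1, 0; 0, 0, 1] *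
        !![1, 0, 0; s₄, 1, s₂; 0, 0, 1] *
        !![1, 0, 0; 0, 1, 0; s₃, s₁, 1] *
        !![1, s₂, s₄; 0, 1, 0; 0, 0, 1] = 1) :
    s₄ + s₁ + s₂ * s₃ = 0 ∧ s₃ + s₂ + s₁^2 + s₁ * s₂ * s₃ = 0 := by

  simp only [Matrix.mul_fin_three, Matrix.one_fin_three] at hprod
  have h := Matrix.ext_iff.mpr hprod
  have h00 := h 0 0
  have h02 := h 0 2
  have h20 := h 2 0
  simp only [Matrix.cons_val_zero, Matrix.cons_val_one, Matrix.head_cons, Matrix.cons_val_two, Matrix.tail_cons, Matrix.cons_val_fin_one, Matrix.of_apply] at h00 h02 h20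
  have hA : s₄ + s₁ + s₂ * s₃ = 0 := by linear_combination h02 - s₄ * h00
  refine ⟨hA, ?_⟩
  linear_combination h20 - (s₄ + s₂ * s₃ - s₁) * hA
end
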